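/- Let p(n) count {Empty, Blue, Red}-colorings of Fin n with no two adjacent indices both non-Empty, and let c(n) count such colorings of ZMod n with no two cyclically adjacent indices both non-Empty. Then for all n ≥ 4, c(n) = p(n-1) + 2·p(n-3). -/

import Mathlib

/-!
Sort the cycle colorings by the color of vertex `0`. If it is empty, the other `n - 1` vertices
form a path with no further constraint. If it is one of the two colors, both neighbours of `0`
are empty and the remaining `n - 3` vertices form an unconstrained path.
-/

inductive Color : Type
  | Empty | Blue | Red
  deriving DecidableEq

instance : Fintype Color :=
  ⟨{Color.Empty, Color.Blue, Color.Red}, fun x => by cases x <;> simp⟩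

/-- Number of Cis positions on the path `P_n`. -/
def cisPath (n : ℕ) : ℕ :=
  Fintype.card {c : Fin n → Color //
    ∀ i j : Fin n, (j : ℕ) = (i : ℕ) + 1 →
      ¬(c i ≠ Color.Empty ∧ c j ≠ Color.Empty)}

/-- Number of Cis positions on the cycle `C_n`. -/
noncomputable def cisCycle (n : ℕ) : ℕ :=
  Nat.card {c : ZMod n → Color //
    ∀ i : ZMod n, ¬(c i ≠ Color.Empty ∧ c (i + 1) ≠ Color.Empty)}

theorem Color.sum_univ {M : Type*} [AddCommMonoid M] (f : Color → M) :
    ∑ a, f a = f Empty + f Blue + f Red := by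
  rw [add_assoc]
  exact Finset.sum_insert (by decide) |>.trans (congrArg _ (Finset.sum_pair (by decide)))

section FinFibers

variable {α : Type*} {n : ℕ}

theorem Fin.natCard_subtype_eq_sum_cons [Fintype α] (P : (Fin (n + 1) → α) → Prop) :
    Nat.card {c // P c} = ∑ a, Nat.card {f : Fin n → α // P (Fin.cons a f)} := by
  rw [← Nat.card_sigma]
  exact Nat.card_congr <| ((Fin.consEquiv fun _ => α).symm.subtypeEquiv fun c => by
    simp [Fin.consEquiv]).trans (Equiv.subtypeProdEquivSigmaSubtype fun a f => P (Fin.cons a f))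

theorem Fin.natCard_subtype_zero_eq_and (a : α) (P : (Fin (n + 1) → α) → Prop) :
    Nat.card {g // g 0 = a ∧ P g} = Nat.card {f : Fin n → α // P (Fin.cons a f)} :=
  Nat.card_congr
    { toFun g := ⟨Fin.tail g.1, by obtain ⟨g, rfl, hg⟩ := g; rwa [Fin.cons_self_tail]⟩
      invFun f := ⟨Fin.cons a f.1, Fin.cons_zero _ _, f.2⟩
      left_inv := by rintro ⟨g, rfl, hg⟩; simp
      right_inv f := by simp }

theorem Fin.natCard_subtype_last_eq_and (a : α) (P : (Fin (n + 1) → α) → Prop) :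
    Nat.card {g // g (Fin.last n) = a ∧ P g} = Nat.card {f : Fin n → α // P (Fin.snoc f a)} :=
  Nat.card_congr
    { toFun g := ⟨Fin.init g.1, by obtain ⟨g, rfl, hg⟩ := g; rwa [Fin.snoc_init_self]⟩
      invFun f := ⟨Fin.snoc f.1 a, Fin.snoc_last _ _, f.2⟩
      left_inv := by rintro ⟨g, rfl, hg⟩; simp
      right_inv f := by simp }

end FinFibers

def IsPathCis {n : ℕ} (c : Fin n → Color) : Prop :=
  ∀ i j : Fin n, (j : ℕ) = (i : ℕ) + 1 → ¬(c i ≠ Color.Empty ∧ c j ≠ Color.Empty)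

theorem cisPath_eq_natCard (n : ℕ) : cisPath n = Nat.card {c : Fin n → Color // IsPathCis c} :=
  (Nat.card_eq_fintype_card (α := {c : Fin n → Color // ∀ i j : Fin n, (j : ℕ) = (i : ℕ) + 1 →
      ¬(c i ≠ Color.Empty ∧ c j ≠ Color.Empty)})).symm

theorem isPathCis_iff_succ {n : ℕ} (c : Fin (n + 1) → Color) :
    IsPathCis c ↔ ∀ i : Fin n, ¬(c i.castSucc ≠ Color.Empty ∧ c i.succ ≠ Color.Empty) := by
  refine ⟨fun h i => h _ _ rfl, fun h i j hij => ?_⟩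
  have hi : (i : ℕ) < n := by omega
  simpa [show (⟨i, hi⟩ : Fin n).succ = j from Fin.ext hij.symm] using h ⟨i, hi⟩

theorem isPathCis_cons_iff {n : ℕ} (a : Color) (f : Fin (n + 1) → Color) :
    IsPathCis (Fin.cons a f : Fin (n + 2) → Color) ↔
      ¬(a ≠ Color.Empty ∧ f 0 ≠ Color.Empty) ∧ IsPathCis f := by
  simp only [isPathCis_iff_succ, Fin.forall_fin_succ, Fin.castSucc_zero, Fin.cons_zero,
    Fin.cons_succ, ← Fin.succ_castSucc]

theorem isPathCis_snoc_empty {n : ℕ} (f : Fin n → Color) :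
    IsPathCis (Fin.snoc f Color.Empty : Fin (n + 1) → Color) ↔ IsPathCis f := by
  cases n with
  | zero => simp [IsPathCis]
  | succ n =>
    simp only [isPathCis_iff_succ, Fin.forall_fin_succ', Fin.succ_castSucc, Fin.snoc_castSucc,
      Fin.snoc_last, Fin.succ_last, ne_eq, not_true_eq_false, and_false, not_false_eq_true,
      and_true]

-- `ZMod (m + 1)` is `Fin (m + 1)` by definition, with the closing edge `last m + 1 = 0`.
theorem cisCycle_succ (m : ℕ) :
    cisCycle (m + 1) = Nat.card {c : Fin (m + 1) → Color //
      IsPathCis c ∧ ¬(c (Fin.last m) ≠ Color.Empty ∧ c 0 ≠ Color.Empty)} := by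
  refine Nat.card_congr (Equiv.subtypeEquivRight fun c : Fin (m + 1) → Color => ?_)
  change (∀ i : Fin (m + 1), ¬(c i ≠ Color.Empty ∧ c (i + 1) ≠ Color.Empty)) ↔ _
  rw [Fin.forall_fin_succ', isPathCis_iff_succ]
  simp only [Fin.coeSucc_eq_succ, Fin.last_add_one]

theorem natCard_isPathCis_ends_empty (k : ℕ) :
    Nat.card {g : Fin (k + 2) → Color //
      g 0 = Color.Empty ∧ g (Fin.last (k + 1)) = Color.Empty ∧ IsPathCis g} = cisPath k := by
  rw [Fin.natCard_subtype_zero_eq_and]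
  simp only [Fin.cons_last, isPathCis_cons_iff, ne_eq, not_true_eq_false, false_and,
    not_false_eq_true, true_and]
  rw [Fin.natCard_subtype_last_eq_and, cisPath_eq_natCard]
  exact Nat.card_congr (Equiv.subtypeEquivRight fun f => isPathCis_snoc_empty f)

theorem cisCycle_add_two (m : ℕ) :
    cisCycle (m + 2) = ∑ a : Color, Nat.card {g : Fin (m + 1) → Color //
      (a ≠ Color.Empty → g 0 = Color.Empty ∧ g (Fin.last m) = Color.Empty) ∧ IsPathCis g} := by
  rw [cisCycle_succ, Fin.natCard_subtype_eq_sum_cons]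
  refine Finset.sum_congr rfl fun a _ => Nat.card_congr (Equiv.subtypeEquivRight fun g => ?_)
  rw [isPathCis_cons_iff, Fin.cons_last, Fin.cons_zero]
  by_cases ha : a = Color.Empty <;> simp [ha]
  tauto

theorem cisCycle_add_four (k : ℕ) : cisCycle (k + 4) = cisPath (k + 3) + 2 * cisPath (k + 1) := by
  rw [cisCycle_add_two, Color.sum_univ]
  simp [and_assoc, natCard_isPathCis_ends_empty, ← cisPath_eq_natCard]
  ring

theorem cisCycle_eq_cisPath (n : ℕ) (hn : 4 ≤ n) :
    cisCycle n = cisPath (n - 1) + 2 * cisPath (n - 3) := by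
  obtain ⟨k, rfl⟩ : ∃ k, n = k + 4 := ⟨n - 4, by omega⟩
  exact cisCycle_add_four k
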